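/- Under the same assumptions, λ_min(H) ≤ (d+1)/2 · (1 − (1 − θ_min/π) cos θ_min), where θ_min ∈ (0,π) is defined by cos θ_min = max_{i≠j} x_i^T x_j/(d+1). -/

import Mathlib

/-!
Testing the Rayleigh quotient of `H` at `u = (e_a - e_b)/√2`, where `(a, b)` is the pair realising
`cos θ`, gives `u^T H u = (H a a + H b b)/2 - H a b`. Every diagonal entry equals `(d+1)/2` since
`arccos 1 = 0`, and `H a b = (d+1) cos θ (π - θ)/(2π)` since `arccos (cos θ) = θ` on `[0, π]`.
-/

open Matrix

section QuadraticForm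

variable {ι R : Type*} [Fintype ι] [DecidableEq ι]

theorem dotProduct_mulVec_single_sub_single [CommRing R] (M : Matrix ι ι R) (a b : ι) (c : R) :
    (Pi.single a c - Pi.single b c) ⬝ᵥ (M *ᵥ (Pi.single a c - Pi.single b c)) =
      c ^ 2 * (M a a - M a b - M b a + M b b) := by
  simp only [mulVec_sub, sub_dotProduct, dotProduct_sub, mulVec_single, single_dotProduct]
  simp only [Pi.smul_apply, col_apply, MulOpposite.smul_eq_mul_unop, MulOpposite.unop_op]
  ring

theorem sum_sq_single_sub_single [Ring R] {a b : ι} (hab : a ≠ b) (c : R) :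
    ∑ i, (Pi.single a c - Pi.single b c : ι → R) i ^ 2 = 2 * c ^ 2 := by
  rw [Fintype.sum_eq_add a b hab fun i hi => by simp [hi.1, hi.2]]
  simp [hab, hab.symm, two_mul]

end QuadraticForm

/-- The arc-cosine kernel of the NTK Gram matrix, for inputs of squared norm `r`. -/
noncomputable def ntkKernel (r s : ℝ) : ℝ :=
  s * (Real.pi - Real.arccos (s / r)) / (2 * Real.pi)

theorem ntkKernel_self {r : ℝ} (hr : r ≠ 0) : ntkKernel r r = r / 2 := by
  rw [ntkKernel, div_self hr, Real.arccos_one, sub_zero, mul_div_mul_right _ _ Real.pi_ne_zero]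

theorem ntkKernel_of_div_eq_cos {r s θ : ℝ} (hr : r ≠ 0) (hθ : θ ∈ Set.Icc 0 Real.pi)
    (hs : s / r = Real.cos θ) :
    ntkKernel r s = r / 2 * ((1 - θ / Real.pi) * Real.cos θ) := by
  rw [ntkKernel, hs, Real.arccos_cos hθ.1 hθ.2, ← hs]
  field_simp

theorem ntk_gram_lambda_min_upper (d n : ℕ)
    (x : Fin n → EuclideanSpace ℝ (Fin (d + 1)))
    (hnorm : ∀ i, ‖x i‖ = Real.sqrt ((d : ℝ) + 1))
    (H : Matrix (Fin n) (Fin n) ℝ)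
    (hH : ∀ i j, H i j = (inner ℝ (x i) (x j) : ℝ) *
        (Real.pi - Real.arccos ((inner ℝ (x i) (x j) : ℝ) / ((d : ℝ) + 1))) / (2 * Real.pi))
    (θ : ℝ) (hθ : θ ∈ Set.Ioo 0 Real.pi)
    (hach : ∃ i j, i ≠ j ∧ (inner ℝ (x i) (x j) : ℝ) / ((d : ℝ) + 1) = Real.cos θ) :
    ∃ u : Fin n → ℝ, (∑ i, (u i) ^ 2) = 1 ∧
      dotProduct u (H.mulVec u)
        ≤ ((d : ℝ) + 1) / 2 * (1 - (1 - θ / Real.pi) * Real.cos θ) := by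
  obtain ⟨a, b, hab, hcos⟩ := hach
  have hr : (d : ℝ) + 1 ≠ 0 := by positivity
  have hdiag (i : Fin n) : H i i = ((d : ℝ) + 1) / 2 := by
    rw [hH, real_inner_self_eq_norm_sq, hnorm, Real.sq_sqrt (by positivity)]
    exact ntkKernel_self hr
  have hθ' : θ ∈ Set.Icc 0 Real.pi := Set.Ioo_subset_Icc_self hθ
  have hHab : H a b = ((d : ℝ) + 1) / 2 * ((1 - θ / Real.pi) * Real.cos θ) := by
    rw [hH]
    exact ntkKernel_of_div_eq_cos hr hθ' hcos
  have hHba : H b a = ((d : ℝ) + 1) / 2 * ((1 - θ / Real.pi) * Real.cos θ) := by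
    rw [hH, real_inner_comm]
    exact ntkKernel_of_div_eq_cos hr hθ' hcos
  have hc : (Real.sqrt 2)⁻¹ ^ 2 = 1 / 2 := by
    rw [inv_pow, Real.sq_sqrt zero_le_two, one_div]
  refine ⟨Pi.single a (Real.sqrt 2)⁻¹ - Pi.single b (Real.sqrt 2)⁻¹, ?_, le_of_eq ?_⟩
  · rw [sum_sq_single_sub_single hab, hc]
    norm_num
  · rw [dotProduct_mulVec_single_sub_single, hdiag, hdiag, hHab, hHba, hc]
    ring
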